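/- Envy-freeness implies neither PROP-Max nor PROP-Ave for three agents even with nonnegative values: with three agents, one item a, V_1(2,a)=1 and all other values zero, the allocation assigning a to agent 3 is envy-free, but agent 1's value 0 is less than both her PROP-Max share 1/3 and her PROP-Ave share 1/3. -/
import Mathlib


open Finset

noncomputable section

/-- Value agent `i` derives from allocation `π`, restricted to the items in `S`
(with additive externalities: `V i j a` is the value `i` gets when item `a` goes to `j`). -/
def alval {α N : Type*} [DecidableEq α] (V : N → N → α → ℝ) (i : N) (π : α → N)
    (S : Finset α) : ℝ := ∑ a ∈ S, V i (π a) a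

/-- The allocation obtained from `π` by swapping the bundles of agents `i` and `j`. -/
def swapAlloc {α N : Type*} [DecidableEq N] (i j : N) (π : α → N) : α → N :=
  fun a => Equiv.swap i j (π a)

/-- Agent `i` envies agent `j` in allocation `π`. -/
def Envies {α N : Type*} [Fintype α] [DecidableEq α] [DecidableEq N]
    (V : N → N → α → ℝ) (π : α → N) (i j : N) : Prop :=
  alval V i π univ < alval V i (swapAlloc i j π) univ

/-- Envy-freeness up to any item, under externalities. -/
def EFX {α N : Type*} [Fintype α] [DecidableEq α] [DecidableEq N]
    (V : N → N → α → ℝ) (π : α → N) : Prop :=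
  ∀ i j : N, Envies V π i j → ∀ a : α,
    alval V i π (univ.erase a) - alval V i (swapAlloc i j π) (univ.erase a) >
      alval V i π univ - alval V i (swapAlloc i j π) univ →
    alval V i (swapAlloc i j π) (univ.erase a) ≤ alval V i π (univ.erase a)

/-- Envy-freeness up to one item, under externalities. -/
def EF1 {α N : Type*} [Fintype α] [DecidableEq α] [DecidableEq N]
    (V : N → N → α → ℝ) (π : α → N) : Prop :=
  ∀ i j : N, ∃ C : Finset α, C.card ≤ 1 ∧
    alval V i (swapAlloc i j π) (univ \ C) ≤ alval V i π (univ \ C)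

/-- The valuations: three agents, a single item; all values are `0`
except that agent `0` gets value `1` when the item is assigned to agent `1`. -/
def cex9V : Fin 3 → Fin 3 → Unit → ℝ := fun i j _ => if i = 0 ∧ j = 1 then 1 else 0

/-- The allocation assigning the single item to agent `2` (the third agent). -/
def cex9π : Unit → Fin 3 := fun _ => 2

/-- Envy-freeness implies neither PROP-Max nor PROP-Ave for three agents,
even with nonnegative values: the allocation assigning the item to the third agent
is envy-free, but agent `0`'s value is less than both her PROP-Max share `1/3` and
her PROP-Ave share `1/3`. -/
theorem ef_not_prop_max_nor_prop_ave :
    (∀ i j : Fin 3, alval cex9V i (swapAlloc i j cex9π) univ ≤ alval cex9V i cex9π univ) ∧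
      alval cex9V 0 cex9π univ <
        (1 / 3 : ℝ) * ∑ a, univ.sup' univ_nonempty (fun j => cex9V 0 j a) ∧
      alval cex9V 0 cex9π univ < (1 / 3 : ℝ) * ∑ a : Unit, ∑ j : Fin 3, cex9V 0 j a := by
  refine ⟨fun i j => ?_, ?_, ?_⟩
  · fin_cases i <;> fin_cases j <;>
      simp [alval, swapAlloc, cex9V, cex9π, Equiv.swap_apply_def]
  · simp [alval, cex9V, cex9π]
    exact ⟨1, by norm_num⟩
  · simp [alval, cex9V, cex9π, Fin.sum_univ_three]
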